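/- Let Pi be an outerplane graph with Hamiltonian outer cycle v_0, ..., v_{N-1} (in clockwise order) in which all inner faces are triangles. For each i let a(i) and b(i) be defined so that {v_k : a(i) <= k <= b(i)} is the minimal interval (in the cyclic order) containing v_i and all its neighbors, with b(0) redefined to be N. Define branch sets in the half-grid {(i,j): 0 <= j <= i < N}: W(v_i) = {(i,j) : a(i) < j <= i} ∪ {(k,i) : i <= k < b(i)}. Then the sets W(v_i) are pairwise disjoint. -/
import Mathlib


open SimpleGraph

/-- The branch set `W(v_i)` in the half-grid: the diagonal vertex `(i,i)`, the column part
`{(i,j) : a(i) < j ≤ i}` and the row part `{(k,i) : i ≤ k < b(i)}`. -/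
def branchSet {N : ℕ} (a b : Fin N → ℕ) (i : Fin N) : Set (ℕ × ℕ) :=
  {p | p = (i.val, i.val) ∨
       (p.1 = i.val ∧ a i < p.2 ∧ p.2 ≤ i.val) ∨
       (p.2 = i.val ∧ i.val ≤ p.1 ∧ p.1 < b i)}

/-- Let `Π` be an outerplane graph with Hamiltonian outer cycle `v_0, …, v_{N-1}` (encoded
combinatorially: consecutive vertices adjacent, no two chords cross). For each `i`, let
`a i` be the least and `b i` the greatest index among `i` and the neighbors of `v_i`,
except that `b 0` is redefined to be `N`. Then the branch sets
`W(v_i) = {(i,j) : a(i) < j ≤ i} ∪ {(k,i) : i ≤ k < b(i)}` (together with `(i,i)`)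
are pairwise disjoint. -/
theorem branchSets_pairwise_disjoint (N : ℕ) (hN : 3 ≤ N)
    (G : SimpleGraph (Fin N))
    (hcycle : ∀ i : Fin N, G.Adj i ⟨(i.val + 1) % N, Nat.mod_lt _ (by omega)⟩)
    (hnoncross : ¬ ∃ a b c d : Fin N, a < b ∧ b < c ∧ c < d ∧ G.Adj a c ∧ G.Adj b d)
    (a b : Fin N → ℕ)
    (ha : ∀ i : Fin N, IsLeast {k : ℕ | k = i.val ∨ ∃ j : Fin N, G.Adj i j ∧ j.val = k} (a i))
    (hb : ∀ i : Fin N, i.val ≠ 0 →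
      IsGreatest {k : ℕ | k = i.val ∨ ∃ j : Fin N, G.Adj i j ∧ j.val = k} (b i))
    (hb0 : ∀ i : Fin N, i.val = 0 → b i = N) :
    ∀ i j : Fin N, i ≠ j → Disjoint (branchSet a b i) (branchSet a b j) := by
  -- key: no pair j < i with a i < j and i < b j (crossing chords)
  have key : ∀ i j : Fin N, j.val < i.val → a i < j.val → i.val < b j → False := by
    intro i j hji hai hbj
    have hj0 : j.val ≠ 0 := by omega
    -- a i is a neighbor of i
    obtain ⟨hmem, _⟩ := ha i
    have hane : a i ≠ i.val := by omega
    obtain ⟨u, hu, huval⟩ : ∃ u : Fin N, G.Adj i u ∧ u.val = a i := by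
      rcases hmem with h | h
      · omega
      · exact h
    obtain ⟨hmem', _⟩ := hb j hj0
    have hbne : b j ≠ j.val := by omega
    obtain ⟨w, hw, hwval⟩ : ∃ w : Fin N, G.Adj j w ∧ w.val = b j := by
      rcases hmem' with h | h
      · omega
      · exact h
    exact hnoncross ⟨u, j, i, w, by omega, by omega, by omega, hu.symm, hw⟩
  intro i j hij
  rw [Set.disjoint_left]
  intro p hpi hpj
  have hne : i.val ≠ j.val := fun h => hij (Fin.ext h)
  rcases hpi with h1 | ⟨h1, h1a, h1b⟩ | ⟨h1, h1a, h1b⟩ <;>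
    rcases hpj with h2 | ⟨h2, h2a, h2b⟩ | ⟨h2, h2a, h2b⟩
  · rw [h1, Prod.mk.injEq] at h2; omega
  · rw [h1] at h2 h2a h2b; simp at h2 h2a h2b; omega
  · rw [h1] at h2 h2a h2b; simp at h2 h2a h2b; omega
  · rw [h2] at h1 h1a h1b; simp at h1 h1a h1b; omega
  · omega
  · -- col of i, row of j : a i < p.2 = j < i = p.1 < b j
    exact (key i j (by omega) (by omega) (by omega)).elim
  · rw [h2] at h1 h1a h1b; simp at h1 h1a h1b; omega
  · exact (key j i (by omega) (by omega) (by omega)).elim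
  · omega
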